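/- arXiv:1610.07921 — 6 statements merged into one kernel-verified Lean document; each statement's English description precedes it below -/
import Mathlib

section
/- Let K be a finite undirected chordal graph with no dominating vertex (a vertex adjacent to all other vertices), and let K^c be its complement graph. Then for any two edges e1 = {a,b} and e2 = {c,d} of K^c, either e1 and e2 share a common vertex, or there exists an edge of K^c joining an endpoint of e1 to an endpoint of e2. -/
/-- A chord of a closed walk: an edge of `G` between two vertices of the walk
that is not an edge of the walk. -/
def SimpleGraph.Walk.HasChord {V : Type*} {G : SimpleGraph V} {v : V}
    (c : G.Walk v v) : Prop :=
  ∃ a b, a ∈ c.support ∧ b ∈ c.support ∧ G.Adj a b ∧ s(a, b) ∉ c.edges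

/-- A graph is chordal if every cycle with four or more vertices has a chord. -/
def SimpleGraph.IsChordalGraph {V : Type*} (G : SimpleGraph V) : Prop :=
  ∀ (v : V) (c : G.Walk v v), c.IsCycle → 4 ≤ c.length → c.HasChord

/-- A vertex is dominating if it is adjacent to every other vertex. -/
def SimpleGraph.IsDominatingVertex {V : Type*} (G : SimpleGraph V) (v : V) : Prop :=
  ∀ w, w ≠ v → G.Adj v w

/-- `D` is an orientation of `G`: each edge gets exactly one direction. -/
def SimpleGraph.IsOrientation {V : Type*} (G : SimpleGraph V) (D : V → V → Prop) : Prop :=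
  (∀ a b, G.Adj a b ↔ (D a b ∨ D b a)) ∧ ∀ a b, ¬(D a b ∧ D b a)

/-- An orientation (directed relation) is acyclic if it has no directed cycle. -/
def IsAcyclicRel {V : Type*} (D : V → V → Prop) : Prop :=
  ∀ a, ¬ Relation.TransGen D a a

/-- An orientation is moral (w.r.t. `G`) if it contains no v-structure. -/
def SimpleGraph.IsMoralOrient {V : Type*} (G : SimpleGraph V) (D : V → V → Prop) : Prop :=
  ∀ a b c, D a c → D b c → a ≠ b → G.Adj a b

/-- The number of moral acyclic orientations of `G`. -/
noncomputable def moralAcyclicCount {V : Type*} (G : SimpleGraph V) : ℕ :=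
  Set.ncard {D : V → V → Prop |
    G.IsOrientation D ∧ IsAcyclicRel D ∧ G.IsMoralOrient D}

/-- Join of two graphs: all edges of each plus all edges across. -/
def joinGraph {V1 V2 : Type*} (G1 : SimpleGraph V1) (G2 : SimpleGraph V2) :
    SimpleGraph (V1 ⊕ V2) where
  Adj x y := match x, y with
    | .inl a, .inl b => G1.Adj a b
    | .inr a, .inr b => G2.Adj a b
    | .inl _, .inr _ => True
    | .inr _, .inl _ => True
  symm := ⟨by rintro (a | a) (b | b) h <;> simp_all [SimpleGraph.adj_comm]⟩
  loopless := ⟨by rintro (a | a) h <;> simp_all⟩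

/-- Disjoint union of two graphs. -/
def sumGraph {V1 V2 : Type*} (G1 : SimpleGraph V1) (G2 : SimpleGraph V2) :
    SimpleGraph (V1 ⊕ V2) where
  Adj x y := match x, y with
    | .inl a, .inl b => G1.Adj a b
    | .inr a, .inr b => G2.Adj a b
    | _, _ => False
  symm := ⟨by rintro (a | a) (b | b) h <;> simp_all [SimpleGraph.adj_comm]⟩
  loopless := ⟨by rintro (a | a) h <;> simp_all⟩

/-!
The two edges of `Kᶜ` would otherwise form an induced `2K₂` there, i.e. an induced
4-cycle `a c b d` in `K`, whose only possible chords are its diagonals `ab` and `cd`,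
which are non-edges of `K`.
-/

namespace SimpleGraph

variable {V : Type*} {G : SimpleGraph V} {a b c d : V}

def Walk.square (hab : G.Adj a b) (hbc : G.Adj b c) (hcd : G.Adj c d) (hda : G.Adj d a) :
    G.Walk a a :=
  .cons hab (.cons hbc (.cons hcd (.cons hda .nil)))

theorem Walk.square_isCycle (hab : G.Adj a b) (hbc : G.Adj b c) (hcd : G.Adj c d)
    (hda : G.Adj d a) (hac : a ≠ c) (hbd : b ≠ d) :
    (Walk.square hab hbc hcd hda).IsCycle := by
  have := hab.ne
  have := hbc.ne
  have := hcd.ne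
  have := hda.ne
  rw [Walk.isCycle_def, Walk.isTrail_def]
  refine ⟨?_, by simp [Walk.square], ?_⟩
  · simp only [Walk.square, Walk.edges_cons, Walk.edges_nil, List.nodup_cons, List.mem_cons,
      List.not_mem_nil, List.nodup_nil, or_false, Sym2.eq_iff]
    tauto
  · simp only [Walk.square, Walk.support_cons, Walk.support_nil, List.tail_cons,
      List.nodup_cons, List.mem_cons, List.not_mem_nil, List.nodup_nil, or_false]
    tauto

theorem IsChordalGraph.adj_or_adj_of_square (hG : G.IsChordalGraph) (hab : G.Adj a b)
    (hbc : G.Adj b c) (hcd : G.Adj c d) (hda : G.Adj d a) (hac : a ≠ c) (hbd : b ≠ d) :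
    G.Adj a c ∨ G.Adj b d := by
  obtain ⟨x, y, hx, hy, hxy, hchord⟩ :=
    hG a _ (Walk.square_isCycle hab hbc hcd hda hac hbd) le_rfl
  simp only [Walk.square, Walk.support_cons, Walk.support_nil, List.mem_cons,
    List.not_mem_nil, or_false] at hx hy
  simp only [Walk.square, Walk.edges_cons, Walk.edges_nil, List.mem_cons, List.not_mem_nil,
    or_false, Sym2.eq_iff, not_or] at hchord
  have := hxy.ne
  rcases hx with rfl | rfl | rfl | rfl | rfl <;> rcases hy with rfl | rfl | rfl | rfl | rfl <;>
    simp_all [adj_comm]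

end SimpleGraph

theorem complement_edges_close_general {V : Type*} (K : SimpleGraph V)
    (hchord : K.IsChordalGraph)
    (a b c d : V) (h1 : Kᶜ.Adj a b) (h2 : Kᶜ.Adj c d) :
    (({a, b} : Set V) ∩ {c, d}).Nonempty ∨
      ∃ x ∈ ({a, b} : Set V), ∃ y ∈ ({c, d} : Set V), Kᶜ.Adj x y := by
  by_contra! ⟨hdisj, hfar⟩
  have adj_across : ∀ x ∈ ({a, b} : Set V), ∀ y ∈ ({c, d} : Set V), K.Adj x y := by
    intro x hx y hy
    have hxy : x ≠ y := fun h => (Set.eq_empty_iff_forall_notMem.mp hdisj) x ⟨hx, h ▸ hy⟩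
    simpa [SimpleGraph.compl_adj, hxy] using hfar x hx y hy
  have hac := adj_across a (by simp) c (by simp)
  have hbc := adj_across b (by simp) c (by simp)
  have hbd := adj_across b (by simp) d (by simp)
  have had := adj_across a (by simp) d (by simp)
  rcases hchord.adj_or_adj_of_square hac hbc.symm hbd had.symm h1.ne h2.ne with hab | hcd
  · exact h1.2 hab
  · exact h2.2 hcd

theorem complement_edges_close {V : Type*} [Fintype V] (K : SimpleGraph V)
    (hchord : K.IsChordalGraph)
    (hdom : ∀ v : V, ¬ K.IsDominatingVertex v)
    (a b c d : V) (h1 : Kᶜ.Adj a b) (h2 : Kᶜ.Adj c d) :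
    (({a, b} : Set V) ∩ {c, d}).Nonempty ∨
      ∃ x ∈ ({a, b} : Set V), ∃ y ∈ ({c, d} : Set V), Kᶜ.Adj x y :=
  complement_edges_close_general K hchord a b c d h1 h2
end

section
/- Let K be a finite undirected chordal graph on at least 2 vertices with no dominating vertex. Then the complement graph K^c is connected. -/
/-! If `u` and `v` lie in different components of `Kᶜ`, then every vertex of the component of
`u` is `K`-adjacent to every vertex of the component of `v`. A non-neighbour `a` of `u` and a
non-neighbour `b` of `v` in `K` lie in these two components, so `u v a b` is a 4-cycle of `K`
whose diagonals `ua` and `vb` are missing, contradicting chordality. -/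

namespace SimpleGraph

variable {V : Type*} {G : SimpleGraph V}

theorem adj_of_not_reachable_compl {a b : V} (h : ¬ Gᶜ.Reachable a b) : G.Adj a b := by
  by_contra hab
  exact h (Adj.reachable ((compl_adj G a b).2 ⟨fun e => h (e ▸ Reachable.refl a), hab⟩))

theorem exists_compl_adj_of_not_isDominatingVertex {v : V} (h : ¬ G.IsDominatingVertex v) :
    ∃ w, Gᶜ.Adj v w := by
  simp only [IsDominatingVertex, not_forall] at h
  obtain ⟨w, hwv, hvw⟩ := h
  exact ⟨w, (compl_adj G v w).2 ⟨hwv.symm, hvw⟩⟩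

theorem IsChordalGraph.adj_or_adj_of_four_cycle (hG : G.IsChordalGraph) {a b c d : V}
    (hab : G.Adj a b) (hbc : G.Adj b c) (hcd : G.Adj c d) (hda : G.Adj d a)
    (hac : a ≠ c) (hbd : b ≠ d) : G.Adj a c ∨ G.Adj b d := by
  let cyc : G.Walk a a := .cons hab (.cons hbc (.cons hcd (.cons hda .nil)))
  have hcyc : cyc.IsCycle := by
    simp [cyc, Walk.cons_isCycle_iff, hab.ne, hbc.ne, hcd.ne, hda.ne, hac, hbd, hab.ne.symm,
      hda.ne.symm, hac.symm]
  obtain ⟨x, y, hx, hy, hxy, hxy_notMem⟩ := hG a cyc hcyc (by simp [cyc])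
  simp only [cyc, Walk.support_cons, Walk.support_nil, List.mem_cons, List.not_mem_nil,
    or_false] at hx hy
  simp only [cyc, Walk.edges_cons, Walk.edges_nil, List.mem_cons, List.not_mem_nil, or_false,
    not_or, Sym2.eq_iff] at hxy_notMem
  rcases hx with rfl | rfl | rfl | rfl | rfl <;> rcases hy with rfl | rfl | rfl | rfl | rfl <;>
    simp_all [adj_comm]

end SimpleGraph

theorem complement_connected {V : Type*} [Fintype V] (K : SimpleGraph V)
    (hcard : 2 ≤ Fintype.card V)
    (hchord : K.IsChordalGraph)
    (hdom : ∀ v : V, ¬ K.IsDominatingVertex v) :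
    Kᶜ.Connected := by
  have : Nonempty V := Fintype.card_pos_iff.mp (by omega)
  refine ⟨fun u v => ?_⟩
  by_contra huv
  obtain ⟨a, hua⟩ := SimpleGraph.exists_compl_adj_of_not_isDominatingVertex (hdom u)
  obtain ⟨b, hvb⟩ := SimpleGraph.exists_compl_adj_of_not_isDominatingVertex (hdom v)
  have hav : ¬ Kᶜ.Reachable a v := fun h => huv (hua.reachable.trans h)
  have hub : ¬ Kᶜ.Reachable u b := fun h => huv (h.trans hvb.reachable.symm)
  have hab : ¬ Kᶜ.Reachable a b := fun h => hav (h.trans hvb.reachable.symm)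
  rcases hchord.adj_or_adj_of_four_cycle
      (SimpleGraph.adj_of_not_reachable_compl huv)
      (SimpleGraph.adj_of_not_reachable_compl hav).symm
      (SimpleGraph.adj_of_not_reachable_compl hab)
      (SimpleGraph.adj_of_not_reachable_compl hub).symm hua.ne hvb.ne with h | h
  · exact ((SimpleGraph.compl_adj K u a).1 hua).2 h
  · exact ((SimpleGraph.compl_adj K v b).1 hvb).2 h
end

section
/- Every moral acyclic orientation of a finite connected undirected chordal graph has exactly one source vertex (a vertex with no incoming directed edge). -/
/-!
A finite acyclic orientation has a source, since the strict order it generates has a minimal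
element. For uniqueness, let `s ≠ t` be sources and follow a shortest walk from `s` to `t`.
Its first edge leaves `s`; if some later edge were reversed we would meet a pattern
`a → u ← x` on the walk, and morality would make `a` and `x` equal or adjacent, shortening the
walk. So every edge points forward and the last one enters `t`, which is impossible.
-/

theorem IsAcyclicRel.exists_source {V : Type*} [Finite V] [Nonempty V] {D : V → V → Prop}
    (hac : IsAcyclicRel D) : ∃ s, ∀ w, ¬ D w s := by
  have : IsTrans V (Relation.TransGen D) := ⟨fun _ _ _ => Relation.TransGen.trans⟩
  have : Std.Irrefl (Relation.TransGen D) := ⟨hac⟩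
  obtain ⟨s, -, hmin⟩ := (Finite.wellFounded_of_trans_of_irrefl (Relation.TransGen D)).has_min
    Set.univ ⟨Classical.arbitrary V, trivial⟩
  exact ⟨s, fun w hw => hmin w trivial (.single hw)⟩

namespace SimpleGraph

variable {V : Type*} {G : SimpleGraph V} {D : V → V → Prop}

theorem IsMoralOrient.exists_pred_of_length_eq_dist (hm : G.IsMoralOrient D)
    (hor : G.IsOrientation D) {a u v : V} (h : G.Adj a u) (p : G.Walk u v) (hau : D a u)
    (hp : (p.cons h).length = G.dist a v) : ∃ w, D w v := by
  induction p generalizing a with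
  | nil => exact ⟨a, hau⟩
  | @cons u x v hux q ih =>
    rcases (hor.1 u x).1 hux with hfwd | hbwd
    · exact ih hux hfwd (length_eq_dist_of_subwalk hp (Walk.isSubwalk_cons _ h))
    · have hshort : G.dist a v ≤ q.length + 1 := by
        by_cases hax : a = x
        · subst hax
          exact (dist_le q).trans (Nat.le_succ _)
        · exact dist_le (q.cons (hm a x u hau hbwd hax))
      simp only [Walk.length_cons] at hp
      omega

theorem IsMoralOrient.eq_of_source (hm : G.IsMoralOrient D) (hor : G.IsOrientation D)
    {s t : V} (hst : G.Reachable s t) (hs : ∀ w, ¬ D w s) (ht : ∀ w, ¬ D w t) : s = t := by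
  obtain ⟨p, hp⟩ := hst.exists_walk_length_eq_dist
  cases p with
  | nil => rfl
  | cons h q =>
    have hsu := ((hor.1 _ _).1 h).resolve_right (hs _)
    obtain ⟨w, hw⟩ := hm.exists_pred_of_length_eq_dist hor h q hsu hp
    exact (ht w hw).elim

end SimpleGraph

theorem unique_source_general {V : Type*} [Fintype V] (G : SimpleGraph V)
    (hconn : G.Connected)
    (D : V → V → Prop) (hor : G.IsOrientation D)
    (hac : IsAcyclicRel D) (hm : G.IsMoralOrient D) :
    ∃! s : V, ∀ w : V, ¬ D w s := by
  have := hconn.nonempty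
  obtain ⟨s, hs⟩ := hac.exists_source
  exact ⟨s, hs, fun t ht => hm.eq_of_source hor (hconn t s) ht hs⟩

theorem unique_source {V : Type*} [Fintype V] (G : SimpleGraph V)
    (hconn : G.Connected) (hchord : G.IsChordalGraph)
    (D : V → V → Prop) (hor : G.IsOrientation D)
    (hac : IsAcyclicRel D) (hm : G.IsMoralOrient D) :
    ∃! s : V, ∀ w : V, ¬ D w s :=
  unique_source_general G hconn D hor hac hm
end

section
/- Let G be the complete graph on p ≥ 3 vertices with one edge removed. Then the number of moral acyclic orientations of G equals 2·(p−1)! − (p−2)!. -/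
/-!
In a moral acyclic orientation of `K_p` minus the edge `ab`, one of `a`, `b` is a sink: a child
`c` of `a` is adjacent to `b`, and morality forbids `b → c`, so `c → b`; children of both `a` and
`b` would then close a directed cycle `a → c → b → c' → a`.

Conversely, if every vertex of a set `S` is a sink and `Sᶜ` is a clique, every parent lies in the
clique, so the orientation is moral. Such orientations are determined by a linear order of `Sᶜ`
(with `S` ranked on top), so there are `|Sᶜ|!` of them. Inclusion–exclusion over `S = {a}`, `{b}`,
whose intersection is `S = {a, b}`, gives `2 (p - 1)! - (p - 2)!`.
-/

section

variable {α β : Type*}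

theorem isAcyclicRel_of_map_lt [Preorder β] {D : α → α → Prop} (f : α → β)
    (hf : ∀ x y, D x y → f x < f y) : IsAcyclicRel D := fun x hx =>
  lt_irrefl (f x) <| by simpa [Relation.transGen_eq_self] using hx.lift f hf

theorem IsAcyclicRel.irrefl {D : α → α → Prop} (hD : IsAcyclicRel D) (x : α) : ¬ D x x :=
  fun h => hD x (.single h)

theorem IsAcyclicRel.trans_of_total {D : α → α → Prop} (hD : IsAcyclicRel D)
    (htot : ∀ x y, x ≠ y → D x y ∨ D y x) {x y z : α} (hxy : D x y) (hyz : D y z) :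
    D x z := by
  have hxz : x ≠ z := by
    rintro rfl
    exact hD x ((Relation.TransGen.single hxy).tail hyz)
  refine (htot x z hxz).resolve_right fun hzx => hD x ?_
  exact ((Relation.TransGen.single hxy).tail hyz).tail hzx

theorem IsAcyclicRel.exists_equiv_fin [Finite α] {D : α → α → Prop} (hD : IsAcyclicRel D)
    (htot : ∀ x y, x ≠ y → D x y ∨ D y x) :
    ∃ σ : α ≃ Fin (Nat.card α), ∀ x y, D x y ↔ σ x < σ y := by
  classical
  have := Fintype.ofFinite α
  have : IsStrictTotalOrder α D :=
    { trichotomous := fun x y hxy hyx => by_contra fun hne => (htot x y hne).elim hxy hyx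
      irrefl := hD.irrefl
      trans := fun _ _ _ => hD.trans_of_total htot }
  let := linearOrderOfSTO D
  let e := (monoEquivOfFin α Nat.card_eq_fintype_card.symm).symm
  exact ⟨e, fun x y => (e.lt_iff_lt (x := x) (y := y)).symm⟩

theorem Equiv.eq_of_lt_imp_lt {n : ℕ} {σ τ : α ≃ Fin n}
    (h : ∀ x y, σ x < σ y → τ x < τ y) : σ = τ := by
  let π := σ.symm.trans τ
  have hπ : StrictMono π := fun i j hij => by
    simpa [π] using h (σ.symm i) (σ.symm j) (by simpa using hij)
  have hid : StrictMono.orderIsoOfSurjective π hπ π.surjective = OrderIso.refl _ :=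
    Subsingleton.elim _ _
  ext x
  simpa [π] using congrArg (fun e => (e (σ x) : ℕ)) hid |>.symm

namespace SimpleGraph

variable (G : SimpleGraph α)

def orientBy [LT β] (f : α → β) (x y : α) : Prop :=
  G.Adj x y ∧ f x < f y

def acyclicOrientationsWithSinks (S : Set α) : Set (α → α → Prop) :=
  {D | G.IsOrientation D ∧ IsAcyclicRel D ∧ ∀ s ∈ S, ∀ y, ¬ D s y}

variable {G}

theorem isOrientation_orientBy [LinearOrder β] {f : α → β}
    (hf : ∀ x y, G.Adj x y → f x ≠ f y) : G.IsOrientation (G.orientBy f) := by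
  refine ⟨fun x y => ⟨fun h => ?_, ?_⟩, fun x y h => lt_asymm h.1.2 h.2.2⟩
  · exact (hf x y h).lt_or_gt.imp (⟨h, ·⟩) (⟨h.symm, ·⟩)
  · rintro (h | h)
    exacts [h.1, h.1.symm]

theorem isAcyclicRel_orientBy [Preorder β] (f : α → β) : IsAcyclicRel (G.orientBy f) :=
  isAcyclicRel_of_map_lt f fun _ _ h => h.2

theorem IsOrientation.eq_orientBy [Preorder β] {D : α → α → Prop} (hD : G.IsOrientation D)
    (f : α → β) (hf : ∀ x y, D x y → f x < f y) : D = G.orientBy f := by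
  funext x y
  refine propext ⟨fun h => ⟨(hD.1 x y).2 (.inl h), hf x y h⟩, fun ⟨hadj, hlt⟩ => ?_⟩
  exact ((hD.1 x y).1 hadj).resolve_right fun h => lt_asymm hlt (hf y x h)

open Classical in
noncomputable def rankAbove (S : Set α) {m : ℕ} (σ : ↥Sᶜ ≃ Fin m) (x : α) : ℕ :=
  if h : x ∈ S then m else σ ⟨x, h⟩

section rankAbove

variable {S : Set α} {m : ℕ} (σ : ↥Sᶜ ≃ Fin m)

theorem rankAbove_of_mem {x : α} (hx : x ∈ S) : rankAbove S σ x = m := dif_pos hx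

theorem rankAbove_of_notMem {x : α} (hx : x ∉ S) : rankAbove S σ x = σ ⟨x, hx⟩ := dif_neg hx

theorem rankAbove_le (x : α) : rankAbove S σ x ≤ m := by
  by_cases hx : x ∈ S
  · rw [rankAbove_of_mem σ hx]
  · rw [rankAbove_of_notMem σ hx]
    exact (σ _).isLt.le

theorem orientBy_rankAbove_mem (hS : G.IsIndepSet S) :
    G.orientBy (rankAbove S σ) ∈ G.acyclicOrientationsWithSinks S := by
  refine ⟨isOrientation_orientBy fun x y hxy => ?_, isAcyclicRel_orientBy _,
    fun s hs y h => (rankAbove_le σ y).not_gt ((rankAbove_of_mem σ hs).symm.trans_lt h.2)⟩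
  by_cases hx : x ∈ S <;> by_cases hy : y ∈ S
  · exact absurd hxy (hS hx hy hxy.ne)
  all_goals simp only [rankAbove_of_mem, rankAbove_of_notMem, hx, hy, ne_eq, Fin.val_eq_val,
    not_false_eq_true]
  · exact (σ _).isLt.ne'
  · exact (σ _).isLt.ne
  · exact σ.injective.ne fun h => hxy.ne (congrArg Subtype.val h)

theorem injective_orientBy_rankAbove (hS : G.IsClique Sᶜ) :
    Function.Injective fun σ : ↥Sᶜ ≃ Fin m => G.orientBy (rankAbove S σ) := by
  intro σ τ h
  refine Equiv.eq_of_lt_imp_lt fun x y hlt => ?_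
  have hadj : G.Adj x y := hS x.2 y.2 fun hxy => hlt.ne (by rw [Subtype.ext hxy])
  have := congrFun (congrFun h x) y
  simp only [orientBy, rankAbove_of_notMem _ x.2, rankAbove_of_notMem _ y.2, Fin.val_fin_lt,
    hadj, true_and, Subtype.coe_eta] at this
  exact this ▸ hlt

end rankAbove

theorem exists_orientBy_rankAbove_eq [Finite α] {S : Set α} (hS : G.IsClique Sᶜ)
    {D : α → α → Prop} (hD : D ∈ G.acyclicOrientationsWithSinks S) :
    ∃ σ : ↥Sᶜ ≃ Fin (Nat.card ↥Sᶜ), G.orientBy (rankAbove S σ) = D := by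
  obtain ⟨hor, hac, hsink⟩ := hD
  have hacS : IsAcyclicRel fun x y : ↥Sᶜ => D x y := fun x hx =>
    hac x (hx.lift Subtype.val fun _ _ => id)
  obtain ⟨σ, hσ⟩ := hacS.exists_equiv_fin fun x y hxy =>
    (hor.1 x y).1 (hS x.2 y.2 fun h => hxy (Subtype.ext h))
  refine ⟨σ, (hor.eq_orientBy _ fun x y hxy => ?_).symm⟩
  have hx : x ∉ S := fun hx => hsink x hx y hxy
  by_cases hy : y ∈ S
  · rw [rankAbove_of_notMem σ hx, rankAbove_of_mem σ hy]
    exact (σ _).isLt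
  · rw [rankAbove_of_notMem σ hx, rankAbove_of_notMem σ hy]
    exact (hσ ⟨x, hx⟩ ⟨y, hy⟩).1 hxy

theorem ncard_acyclicOrientationsWithSinks [Finite α] {S : Set α} (hSc : G.IsClique Sᶜ)
    (hS : G.IsIndepSet S) :
    (G.acyclicOrientationsWithSinks S).ncard = (Nat.card ↥Sᶜ).factorial := by
  classical
  have : Fintype α := Fintype.ofFinite α
  have hrange : Set.range (fun σ : ↥Sᶜ ≃ Fin (Nat.card ↥Sᶜ) => G.orientBy (rankAbove S σ)) =
      G.acyclicOrientationsWithSinks S :=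
    Set.Subset.antisymm (Set.range_subset_iff.2 fun σ => orientBy_rankAbove_mem σ hS)
      fun D hD => exists_orientBy_rankAbove_eq hSc hD
  rw [← hrange, Set.ncard_range_of_injective (injective_orientBy_rankAbove hSc),
    Nat.card_eq_fintype_card, Fintype.card_equiv (Finite.equivFin _), Nat.card_eq_fintype_card]

theorem acyclicOrientationsWithSinks_inter (G : SimpleGraph α) (S T : Set α) :
    G.acyclicOrientationsWithSinks S ∩ G.acyclicOrientationsWithSinks T =
      G.acyclicOrientationsWithSinks (S ∪ T) := by
  ext D
  simp only [acyclicOrientationsWithSinks, Set.mem_inter_iff, Set.mem_ofPred_eq, Set.mem_union,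
    or_imp, forall_and]
  tauto

variable {D : α → α → Prop}

theorem isMoralOrient_of_isClique_compl {G : SimpleGraph α} {S : Set α} (hS : G.IsClique Sᶜ)
    (hsink : ∀ s ∈ S, ∀ y, ¬ D s y) : G.IsMoralOrient D :=
  fun x y c hx hy hxy => hS (fun h => hsink x h c hx) (fun h => hsink y h c hy) hxy

theorem IsMoralOrient.rel_of_rel_of_neighborSet_eq {G : SimpleGraph α}
    (hmor : G.IsMoralOrient D) (hor : G.IsOrientation D) {a b c : α} (hab : a ≠ b)
    (htwin : G.neighborSet a = G.neighborSet b) (hac : D a c) : D c b := by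
  have hbc : G.Adj b c := by
    rw [← mem_neighborSet, ← htwin]
    exact (hor.1 a c).2 (.inl hac)
  refine ((hor.1 b c).1 hbc).resolve_left fun hbc' => G.irrefl (v := b) ?_
  rw [← mem_neighborSet, ← htwin]
  exact hmor a b c hac hbc' hab

theorem IsMoralOrient.sink_or_sink_of_neighborSet_eq {G : SimpleGraph α}
    (hmor : G.IsMoralOrient D) (hor : G.IsOrientation D) (hacyc : IsAcyclicRel D) {a b : α}
    (hab : a ≠ b) (htwin : G.neighborSet a = G.neighborSet b) :
    (∀ y, ¬ D a y) ∨ (∀ y, ¬ D b y) := by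
  by_contra! ⟨⟨c, hac⟩, ⟨c', hbc'⟩⟩
  have hcb := hmor.rel_of_rel_of_neighborSet_eq hor hab htwin hac
  have hc'a := hmor.rel_of_rel_of_neighborSet_eq hor hab.symm htwin.symm hbc'
  exact hacyc a ((((Relation.TransGen.single hac).tail hcb).tail hbc').tail hc'a)

section CompleteMinusEdge

variable {a b : α}

theorem adj_top_sdiff_edge {x y : α} :
    (⊤ \ fromEdgeSet {s(a, b)} : SimpleGraph α).Adj x y ↔
      x ≠ y ∧ ¬ (x = a ∧ y = b ∨ x = b ∧ y = a) := by
  simp only [sdiff_adj, top_adj, fromEdgeSet_adj, Set.mem_singleton_iff, Sym2.eq_iff]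
  tauto

theorem neighborSet_top_sdiff_edge_left_eq_right :
    (⊤ \ fromEdgeSet {s(a, b)} : SimpleGraph α).neighborSet a =
      (⊤ \ fromEdgeSet {s(a, b)} : SimpleGraph α).neighborSet b := by
  ext c
  simp only [mem_neighborSet, adj_top_sdiff_edge]
  grind

theorem isClique_compl_singleton_top_sdiff_edge {v : α}
    (hv : v ∈ ({a, b} : Set α)) :
    (⊤ \ fromEdgeSet {s(a, b)} : SimpleGraph α).IsClique {v}ᶜ := by
  intro x hx y hy hxy
  simp_all only [Set.mem_insert_iff, Set.mem_singleton_iff, Set.mem_compl_iff,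
    adj_top_sdiff_edge]
  grind

theorem isClique_compl_pair_top_sdiff_edge :
    (⊤ \ fromEdgeSet {s(a, b)} : SimpleGraph α).IsClique ({a, b} : Set α)ᶜ :=
  (isClique_compl_singleton_top_sdiff_edge (Set.mem_insert a {b})).subset
    (Set.compl_subset_compl.2 (Set.singleton_subset_iff.2 (Set.mem_insert a {b})))

theorem isIndepSet_pair_top_sdiff_edge :
    (⊤ \ fromEdgeSet {s(a, b)} : SimpleGraph α).IsIndepSet {a, b} :=
  Set.pairwise_pair.2 fun _ => by simp

theorem setOf_moral_acyclic_top_sdiff_edge_eq_union (hab : a ≠ b) :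
    {D | (⊤ \ fromEdgeSet {s(a, b)} : SimpleGraph α).IsOrientation D ∧ IsAcyclicRel D ∧
        (⊤ \ fromEdgeSet {s(a, b)} : SimpleGraph α).IsMoralOrient D} =
      (⊤ \ fromEdgeSet {s(a, b)} : SimpleGraph α).acyclicOrientationsWithSinks {a} ∪
        (⊤ \ fromEdgeSet {s(a, b)} : SimpleGraph α).acyclicOrientationsWithSinks {b} := by
  ext D
  constructor
  · rintro ⟨hor, hacyc, hmor⟩
    refine (hmor.sink_or_sink_of_neighborSet_eq hor hacyc hab
      neighborSet_top_sdiff_edge_left_eq_right).imp (fun h => ?_) (fun h => ?_)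
    all_goals exact ⟨hor, hacyc, by simpa using h⟩
  · rintro (⟨hor, hacyc, hsink⟩ | ⟨hor, hacyc, hsink⟩)
    exacts [⟨hor, hacyc, isMoralOrient_of_isClique_compl
        (isClique_compl_singleton_top_sdiff_edge (by simp)) hsink⟩,
      ⟨hor, hacyc, isMoralOrient_of_isClique_compl
        (isClique_compl_singleton_top_sdiff_edge (by simp)) hsink⟩]

end CompleteMinusEdge

end SimpleGraph

end

theorem count_complete_minus_one_edge_general (p : ℕ) (a b : Fin p)
    (hab : a ≠ b) :
    moralAcyclicCount ((⊤ : SimpleGraph (Fin p)) \ SimpleGraph.fromEdgeSet {s(a, b)})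
      = 2 * Nat.factorial (p - 1) - Nat.factorial (p - 2) := by
  open SimpleGraph in
  rw [moralAcyclicCount, setOf_moral_acyclic_top_sdiff_edge_eq_union hab]
  set G := (⊤ : SimpleGraph (Fin p)) \ fromEdgeSet {s(a, b)}
  have hcard (s : Set (Fin p)) : Nat.card ↥sᶜ = p - s.ncard := by
    rw [Nat.card_coe_set_eq, Set.ncard_compl, Nat.card_eq_fintype_card, Fintype.card_fin]
  have hsingle (v : Fin p) (hv : v ∈ ({a, b} : Set (Fin p))) :
      (G.acyclicOrientationsWithSinks {v}).ncard = (p - 1).factorial := by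
    rw [ncard_acyclicOrientationsWithSinks (isClique_compl_singleton_top_sdiff_edge hv)
      (Set.pairwise_singleton _ _), hcard, Set.ncard_singleton]
  have hpair : (G.acyclicOrientationsWithSinks {a, b}).ncard = (p - 2).factorial := by
    rw [ncard_acyclicOrientationsWithSinks isClique_compl_pair_top_sdiff_edge
      isIndepSet_pair_top_sdiff_edge, hcard, Set.ncard_pair hab]
  have hincl := Set.ncard_union_add_ncard_inter (G.acyclicOrientationsWithSinks {a})
    (G.acyclicOrientationsWithSinks {b})
  rw [acyclicOrientationsWithSinks_inter, ← Set.insert_eq, hpair, hsingle a (by simp),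
    hsingle b (by simp)] at hincl
  omega

theorem count_complete_minus_one_edge (p : ℕ) (hp : 3 ≤ p) (a b : Fin p)
    (hab : a ≠ b) :
    moralAcyclicCount ((⊤ : SimpleGraph (Fin p)) \ SimpleGraph.fromEdgeSet {s(a, b)})
      = 2 * Nat.factorial (p - 1) - Nat.factorial (p - 2) :=
  count_complete_minus_one_edge_general p a b hab
end

section
/- Let G be the join of a two-vertex edgeless graph with a complete graph on m vertices, i.e., the complete graph on m+2 vertices minus one edge. Then the number of moral acyclic orientations of G equals (2m + 1)·m!. -/
namespace CountMAO

/-- The orientation determined by a ranking of the clique vertices and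
gap positions for the two non-adjacent vertices. -/
def DOf (m : ℕ) (π : Equiv.Perm (Fin m)) (g : Fin 2 → Fin (m+1)) :
    (Fin 2 ⊕ Fin m) → (Fin 2 ⊕ Fin m) → Prop
  | .inl _, .inl _ => False
  | .inl a, .inr k => (g a : ℕ) ≤ (π k : ℕ)
  | .inr k, .inl a => (π k : ℕ) < (g a : ℕ)
  | .inr k, .inr k' => (π k : ℕ) < (π k' : ℕ)

def gapsOf (m : ℕ) : Fin (m+1) ⊕ Fin m → Fin 2 → Fin (m+1)
  | .inl i => ![i, Fin.last m]
  | .inr j => ![Fin.last m, j.castSucc]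

def Phi (m : ℕ) (p : Equiv.Perm (Fin m) × (Fin (m+1) ⊕ Fin m)) :
    (Fin 2 ⊕ Fin m) → (Fin 2 ⊕ Fin m) → Prop :=
  DOf m p.1 (gapsOf m p.2)

abbrev GJ (m : ℕ) := joinGraph (⊥ : SimpleGraph (Fin 2)) (⊤ : SimpleGraph (Fin m))

def htOf (m : ℕ) (π : Equiv.Perm (Fin m)) (g : Fin 2 → Fin (m+1)) :
    (Fin 2 ⊕ Fin m) → ℕ
  | .inl a => 2 * (g a : ℕ)
  | .inr k => 2 * (π k : ℕ) + 1

lemma card_val_lt (m c : ℕ) (hc : c ≤ m) :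
    (Finset.univ.filter fun j : Fin m => (j : ℕ) < c).card = c := by
  have h : (Finset.univ.filter fun j : Fin m => (j : ℕ) < c).map Fin.valEmbedding
      = Finset.range c := by
    ext n
    simp only [Finset.mem_map, Finset.mem_filter, Finset.mem_univ, true_and,
      Fin.valEmbedding_apply, Finset.mem_range]
    constructor
    · rintro ⟨j, hj, rfl⟩; exact hj
    · intro hn; exact ⟨⟨n, lt_of_lt_of_le hn hc⟩, hn, rfl⟩
  have := congrArg Finset.card h
  rwa [Finset.card_map, Finset.card_range] at this

lemma card_perm_lt (m : ℕ) (σ : Equiv.Perm (Fin m)) (c : ℕ) (hc : c ≤ m) :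
    (Finset.univ.filter fun k : Fin m => ((σ k : Fin m) : ℕ) < c).card = c := by
  have h : (Finset.univ.filter fun k : Fin m => ((σ k : Fin m) : ℕ) < c)
      = (Finset.univ.filter fun j : Fin m => (j : ℕ) < c).map σ.symm.toEmbedding := by
    ext k
    rw [Finset.mem_map_equiv]
    simp
  rw [h, Finset.card_map, card_val_lt m c hc]

lemma Phi_mem (m : ℕ) (π : Equiv.Perm (Fin m)) (g : Fin 2 → Fin (m+1))
    (hg : g 0 = Fin.last m ∨ g 1 = Fin.last m) :
    (GJ m).IsOrientation (DOf m π g) ∧ IsAcyclicRel (DOf m π g) ∧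
      (GJ m).IsMoralOrient (DOf m π g) := by
  refine ⟨⟨?_, ?_⟩, ?_, ?_⟩
  · rintro (a|k) (b|k')
    · simp [GJ, joinGraph, DOf]
    · show True ↔ _
      simp only [DOf, true_iff]
      omega
    · show True ↔ _
      simp only [DOf, true_iff]
      omega
    · show k ≠ k' ↔ _
      simp only [DOf]
      have hkk : (π k : ℕ) = (π k' : ℕ) ↔ k = k' := by
        constructor
        · intro h; exact π.injective (Fin.val_injective h)
        · rintro rfl; rfl
      rw [ne_eq, ← hkk]
      omega
  · rintro (a|k) (b|k') ⟨h1, h2⟩ <;> simp only [DOf] at h1 h2 <;> omega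
  · intro x hx
    have key : ∀ a b, DOf m π g a b → htOf m π g a < htOf m π g b := by
      rintro (a|k) (b|k') h <;> simp only [DOf] at h <;> simp only [htOf] <;> omega
    have tg : ∀ a b, Relation.TransGen (DOf m π g) a b → htOf m π g a < htOf m π g b := by
      intro a b h
      induction h with
      | single h => exact key _ _ h
      | tail _ h ih => exact ih.trans (key _ _ h)
    exact lt_irrefl _ (tg x x hx)
  · rintro (a|k) (b|k') (c|k'') h1 h2 hne
    · exact absurd h1 (by simp [DOf])
    · -- inl a, inl b, common child inr k''
      simp only [DOf] at h1 h2
      have hab : a ≠ b := fun h => hne (by rw [h])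
      have hklt : (π k'' : ℕ) < m := (π k'').isLt
      have key : (g 0 : ℕ) ≤ (π k'' : ℕ) ∧ (g 1 : ℕ) ≤ (π k'' : ℕ) := by
        fin_cases a <;> fin_cases b
        · exact absurd rfl hab
        · exact ⟨h1, h2⟩
        · exact ⟨h2, h1⟩
        · exact absurd rfl hab
      obtain ⟨k0, k1⟩ := key
      rcases hg with hgl | hgl
      · rw [hgl, Fin.val_last] at k0
        exact absurd k0 (by omega)
      · rw [hgl, Fin.val_last] at k1
        exact absurd k1 (by omega)
    · show True; trivial
    · show True; trivial
    · show True; trivial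
    · show True; trivial
    · show k ≠ k'
      exact fun h => hne (by rw [h])
    · show k ≠ k'
      exact fun h => hne (by rw [h])

lemma Phi_inj (m : ℕ) : Function.Injective (Phi m) := by
  rintro ⟨π, s⟩ ⟨π', s'⟩ h
  have H : ∀ x y, DOf m π (gapsOf m s) x y ↔ DOf m π' (gapsOf m s') x y := by
    intro x y
    rw [show DOf m π (gapsOf m s) = DOf m π' (gapsOf m s') from h]
  have hrr : ∀ k k' : Fin m, ((π k : ℕ) < (π k' : ℕ)) ↔ ((π' k : ℕ) < (π' k' : ℕ)) :=
    fun k k' => H (.inr k) (.inr k')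
  have hπval : ∀ k, (π k : ℕ) = (π' k : ℕ) := by
    intro k
    have h1 : (Finset.univ.filter fun k' : Fin m => ((π k' : Fin m) : ℕ) < ((π k : Fin m) : ℕ)).card
        = (π k : ℕ) := card_perm_lt m π _ (le_of_lt (π k).isLt)
    have h2 : (Finset.univ.filter fun k' : Fin m => ((π' k' : Fin m) : ℕ) < ((π' k : Fin m) : ℕ)).card
        = (π' k : ℕ) := card_perm_lt m π' _ (le_of_lt (π' k).isLt)
    have h3 : (Finset.univ.filter fun k' : Fin m => ((π k' : Fin m) : ℕ) < ((π k : Fin m) : ℕ))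
        = (Finset.univ.filter fun k' : Fin m => ((π' k' : Fin m) : ℕ) < ((π' k : Fin m) : ℕ)) :=
      Finset.filter_congr fun k' _ => hrr k' k
    rw [← h1, h3, h2]
  have hπ : π = π' := by
    ext k
    exact hπval k
  have hgval : ∀ a : Fin 2, ((gapsOf m s a : Fin (m+1)) : ℕ) = ((gapsOf m s' a : Fin (m+1)) : ℕ) := by
    intro a
    have hlr : ∀ k : Fin m, ((gapsOf m s a : Fin (m+1)) : ℕ) ≤ (π k : ℕ) ↔
        ((gapsOf m s' a : Fin (m+1)) : ℕ) ≤ (π k : ℕ) := by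
      intro k
      have := H (.inl a) (.inr k)
      simp only [DOf] at this
      rwa [← hπ] at this
    by_contra hne
    rcases Nat.lt_or_ge ((gapsOf m s a : Fin (m+1)) : ℕ) ((gapsOf m s' a : Fin (m+1)) : ℕ) with hlt | hge
    · have hm : ((gapsOf m s a : Fin (m+1)) : ℕ) < m :=
        lt_of_lt_of_le hlt (Nat.lt_succ_iff.mp (gapsOf m s' a).isLt)
      obtain ⟨k, hk⟩ := π.surjective ⟨_, hm⟩
      have : ((gapsOf m s' a : Fin (m+1)) : ℕ) ≤ (π k : ℕ) := (hlr k).1 (by rw [hk])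
      rw [hk] at this
      simp at this
      omega
    · have hlt : ((gapsOf m s' a : Fin (m+1)) : ℕ) < ((gapsOf m s a : Fin (m+1)) : ℕ) :=
        lt_of_le_of_ne hge fun hh => hne hh.symm
      have hm : ((gapsOf m s' a : Fin (m+1)) : ℕ) < m :=
        lt_of_lt_of_le hlt (Nat.lt_succ_iff.mp (gapsOf m s a).isLt)
      obtain ⟨k, hk⟩ := π.surjective ⟨_, hm⟩
      have : ((gapsOf m s a : Fin (m+1)) : ℕ) ≤ (π k : ℕ) := (hlr k).2 (by rw [hk])
      rw [hk] at this
      simp at this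
      omega
  have hg : gapsOf m s = gapsOf m s' := by
    funext a
    exact Fin.val_injective (hgval a)
  have hs : s = s' := by
    have h0 := congrFun hg 0
    have h1 := congrFun hg 1
    rcases s with i | j <;> rcases s' with i' | j' <;>
      simp only [gapsOf, Matrix.cons_val_zero, Matrix.cons_val_one, Matrix.head_cons] at h0 h1
    · rw [h0]
    · exact absurd h1.symm (ne_of_lt (Fin.castSucc_lt_last j'))
    · exact absurd h1 (ne_of_lt (Fin.castSucc_lt_last j))
    · rw [Fin.castSucc_injective m h1]
  rw [hπ, hs]

lemma Phi_surj (m : ℕ) (D : (Fin 2 ⊕ Fin m) → (Fin 2 ⊕ Fin m) → Prop)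
    (hOr : (GJ m).IsOrientation D) (hAc : IsAcyclicRel D)
    (hMor : (GJ m).IsMoralOrient D) : ∃ p, Phi m p = D := by
  classical
  obtain ⟨htot, hasym⟩ := hOr
  have hirr : ∀ x, ¬ D x x := fun x hx => hAc x (Relation.TransGen.single hx)
  have hUV : ∀ a b : Fin 2, ¬ D (.inl a) (.inl b) := by
    intro a b hD
    exact ((htot (.inl a) (.inl b)).2 (Or.inl hD) : False)
  have hadj_rr : ∀ k k' : Fin m, k ≠ k' → D (.inr k) (.inr k') ∨ D (.inr k') (.inr k) :=
    fun k k' hkk' => (htot _ _).1 (hkk' : (GJ m).Adj (.inr k) (.inr k'))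
  have hadj_lr : ∀ (a : Fin 2) (k : Fin m), D (.inl a) (.inr k) ∨ D (.inr k) (.inl a) :=
    fun a k => (htot _ _).1 (trivial : (GJ m).Adj (.inl a) (.inr k))
  have htc : ∀ x y, Relation.TransGen D x y → ¬ D y x :=
    fun x y h hyx => hAc x (h.tail hyx)
  -- ranks
  set π₀ : Fin m → ℕ := fun k => (Finset.univ.filter fun k' => D (.inr k') (.inr k)).card
    with hπ₀def
  set g₀ : Fin 2 → ℕ := fun a => (Finset.univ.filter fun k => D (.inr k) (.inl a)).card
    with hg₀def
  have L1 : ∀ k k', D (.inr k) (.inr k') → π₀ k < π₀ k' := by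
    intro k k' hD
    have hsub : insert k (Finset.univ.filter fun p => D (.inr p) (.inr k)) ⊆
        Finset.univ.filter fun p => D (.inr p) (.inr k') := by
      intro p hp
      rcases Finset.mem_insert.1 hp with rfl | hp
      · simp [hD]
      · simp only [Finset.mem_filter, Finset.mem_univ, true_and] at hp ⊢
        have htg : Relation.TransGen D (.inr p) (.inr k') :=
          (Relation.TransGen.single hp).tail hD
        have hpk' : p ≠ k' := by
          rintro rfl
          exact hAc _ htg
        exact (hadj_rr p k' hpk').resolve_right fun h => htc _ _ htg h
    have hk : k ∉ (Finset.univ.filter fun p => D (.inr p) (.inr k)) := by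
      simp [hirr]
    have hcard := Finset.card_le_card hsub
    rw [Finset.card_insert_of_notMem hk] at hcard
    simpa [hπ₀def] using hcard
  have hπ₀lt : ∀ k, π₀ k < m := by
    intro k
    have hsub : (Finset.univ.filter fun k' => D (.inr k') (.inr k)) ⊆ Finset.univ.erase k := by
      intro p hp
      simp only [Finset.mem_filter, Finset.mem_univ, true_and] at hp
      refine Finset.mem_erase.2 ⟨?_, Finset.mem_univ p⟩
      rintro rfl
      exact hirr _ hp
    have h2 := Finset.card_le_card hsub
    rw [Finset.card_erase_of_mem (Finset.mem_univ k), Finset.card_univ, Fintype.card_fin] at h2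
    have := k.pos
    simp only [hπ₀def]
    omega
  have hπ₀inj : Function.Injective (fun k => (⟨π₀ k, hπ₀lt k⟩ : Fin m)) := by
    intro k k' h
    by_contra hne
    have h' : π₀ k = π₀ k' := Fin.val_inj.2 h
    rcases hadj_rr k k' hne with hD | hD
    · exact absurd h' (ne_of_lt (L1 _ _ hD))
    · exact absurd h'.symm (ne_of_lt (L1 _ _ hD))
  have hbij := Finite.injective_iff_bijective.1 hπ₀inj
  set π : Equiv.Perm (Fin m) := Equiv.ofBijective _ hbij with hπdef
  have hπval : ∀ k, (π k : ℕ) = π₀ k := fun k => rfl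
  have hπ₀inj' : ∀ p k, π₀ p = π₀ k → p = k := fun p k h => hπ₀inj (Fin.val_inj.1 h)
  have hrr : ∀ k k', D (.inr k) (.inr k') ↔ π₀ k < π₀ k' := by
    intro k k'
    refine ⟨L1 k k', fun hlt => ?_⟩
    have hne : k ≠ k' := by
      rintro rfl
      exact lt_irrefl _ hlt
    rcases hadj_rr k k' hne with h | h
    · exact h
    · exact absurd (L1 _ _ h) (by omega)
  -- counting downsets
  have hcount_lt : ∀ c : ℕ, c ≤ m →
      (Finset.univ.filter fun k' => π₀ k' < c).card = c := by
    intro c hc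
    exact card_perm_lt m π c hc
  have hcount_le : ∀ k : Fin m,
      (Finset.univ.filter fun k' => π₀ k' ≤ π₀ k).card = π₀ k + 1 := by
    intro k
    have h2 : (Finset.univ.filter fun k' => π₀ k' < π₀ k + 1)
        = (Finset.univ.filter fun k' => π₀ k' ≤ π₀ k) :=
      Finset.filter_congr fun k' _ => by omega
    rw [← h2]
    exact hcount_lt (π₀ k + 1) (hπ₀lt k)
  have L2 : ∀ (a : Fin 2) (k : Fin m), D (.inr k) (.inl a) ↔ π₀ k < g₀ a := by
    intro a k
    constructor
    · intro hD
      have hsub : (Finset.univ.filter fun k' => π₀ k' ≤ π₀ k) ⊆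
          Finset.univ.filter fun k' => D (.inr k') (.inl a) := by
        intro p hp
        simp only [Finset.mem_filter, Finset.mem_univ, true_and] at hp ⊢
        rcases eq_or_ne p k with rfl | hne
        · exact hD
        · have hlt : π₀ p < π₀ k := lt_of_le_of_ne hp fun h => hne (hπ₀inj' p k h)
          have hDp : D (.inr p) (.inr k) := (hrr p k).2 hlt
          have htg : Relation.TransGen D (.inr p) (.inl a) :=
            (Relation.TransGen.single hDp).tail hD
          exact (hadj_lr a p).resolve_left fun h => htc _ _ htg h
      have hcard := Finset.card_le_card hsub
      rw [hcount_le k] at hcard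
      simp only [hg₀def]
      omega
    · intro hlt
      by_contra hD
      have hDa : D (.inl a) (.inr k) := (hadj_lr a k).resolve_right hD
      have hsub : (Finset.univ.filter fun k' => D (.inr k') (.inl a)) ⊆
          Finset.univ.filter fun k' => π₀ k' < π₀ k := by
        intro p hp
        simp only [Finset.mem_filter, Finset.mem_univ, true_and] at hp ⊢
        have hpk : p ≠ k := by
          rintro rfl
          exact hD hp
        have htg : Relation.TransGen D (.inr p) (.inr k) :=
          (Relation.TransGen.single hp).tail hDa
        exact L1 p k ((hadj_rr p k hpk).resolve_right fun h => htc _ _ htg h)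
      have hcard := Finset.card_le_card hsub
      rw [hcount_lt (π₀ k) (le_of_lt (hπ₀lt k))] at hcard
      have : g₀ a ≤ π₀ k := by
        simp only [hg₀def]
        omega
      omega
  have hg₀le : ∀ a, g₀ a ≤ m := by
    intro a
    have := Finset.card_le_card (Finset.filter_subset
      (fun k => D (.inr k) (.inl a)) Finset.univ)
    rw [Finset.card_univ, Fintype.card_fin] at this
    simpa [hg₀def] using this
  have L3 : ∀ (a : Fin 2) (k : Fin m), D (.inl a) (.inr k) ↔ g₀ a ≤ π₀ k := by
    intro a k
    have hno : ¬(D (.inl a) (.inr k) ∧ D (.inr k) (.inl a)) := hasym _ _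
    rcases hadj_lr a k with h | h
    · have h2 : ¬ π₀ k < g₀ a := fun hh => hno ⟨h, (L2 a k).2 hh⟩
      exact ⟨fun _ => by omega, fun _ => h⟩
    · have h1 := (L2 a k).1 h
      exact ⟨fun hh => absurd h (fun h' => hno ⟨hh, h'⟩), fun hh => absurd h1 (by omega)⟩
  have hglast : g₀ 0 = m ∨ g₀ 1 = m := by
    by_contra hc
    push_neg at hc
    have h0 : g₀ 0 < m := lt_of_le_of_ne (hg₀le 0) hc.1
    have h1 : g₀ 1 < m := lt_of_le_of_ne (hg₀le 1) hc.2
    obtain ⟨k, hk⟩ : ∃ k, π₀ k = m - 1 := by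
      obtain ⟨k, hk⟩ := hbij.2 ⟨m - 1, by omega⟩
      exact ⟨k, congrArg Fin.val hk⟩
    have hD0 : D (.inl 0) (.inr k) := (L3 0 k).2 (by omega)
    have hD1 : D (.inl 1) (.inr k) := (L3 1 k).2 (by omega)
    have hadj := hMor _ _ _ hD0 hD1 (by simp)
    exact (hadj : False)
  -- build the parameter
  refine ⟨⟨π, if hj : g₀ 1 = m then Sum.inl ⟨g₀ 0, by have := hg₀le 0; omega⟩
      else Sum.inr ⟨g₀ 1, lt_of_le_of_ne (hg₀le 1) hj⟩⟩, ?_⟩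
  have hgap : ∀ a : Fin 2,
      ((gapsOf m (if hj : g₀ 1 = m then Sum.inl ⟨g₀ 0, by have := hg₀le 0; omega⟩
        else Sum.inr ⟨g₀ 1, lt_of_le_of_ne (hg₀le 1) hj⟩) a : Fin (m+1)) : ℕ) = g₀ a := by
    intro a
    by_cases hj : g₀ 1 = m
    · rw [dif_pos hj]
      fin_cases a
      · simp [gapsOf]
      · simp [gapsOf, Fin.val_last, hj]
    · rw [dif_neg hj]
      have h0 : g₀ 0 = m := hglast.resolve_right hj
      fin_cases a
      · simp [gapsOf, Fin.val_last, h0]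
      · simp [gapsOf, Fin.coe_castSucc]
  funext x y
  apply propext
  show DOf m π _ x y ↔ D x y
  cases x with
  | inl a =>
    cases y with
    | inl b => exact ⟨fun h => (h : False).elim, fun h => absurd h (hUV a b)⟩
    | inr k =>
      show _ ≤ (π k : ℕ) ↔ _
      rw [hgap a, hπval k]
      exact (L3 a k).symm
  | inr k =>
    cases y with
    | inl b =>
      show (π k : ℕ) < _ ↔ _
      rw [hgap b, hπval k]
      exact (L2 b k).symm
    | inr k' =>
      show (π k : ℕ) < (π k' : ℕ) ↔ _
      rw [hπval k, hπval k']
      exact (hrr k k').symm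

end CountMAO

set_option maxHeartbeats 1600000 in
theorem count_complete_minus_edge_join (m : ℕ) :
    moralAcyclicCount (joinGraph (⊥ : SimpleGraph (Fin 2)) (⊤ : SimpleGraph (Fin m)))
      = (2 * m + 1) * Nat.factorial m := by
  classical
  have hset : {D : (Fin 2 ⊕ Fin m) → (Fin 2 ⊕ Fin m) → Prop |
      (CountMAO.GJ m).IsOrientation D ∧ IsAcyclicRel D ∧ (CountMAO.GJ m).IsMoralOrient D}
      = Set.range (CountMAO.Phi m) := by
    ext D
    constructor
    · rintro ⟨h1, h2, h3⟩
      exact CountMAO.Phi_surj m D h1 h2 h3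
    · rintro ⟨⟨π, s⟩, rfl⟩
      have hg : CountMAO.gapsOf m s 0 = Fin.last m ∨ CountMAO.gapsOf m s 1 = Fin.last m := by
        cases s <;> simp [CountMAO.gapsOf]
      exact CountMAO.Phi_mem m π (CountMAO.gapsOf m s) hg
  show Set.ncard _ = _
  rw [hset, ← Set.image_univ, Set.ncard_image_of_injective _ (CountMAO.Phi_inj m),
    Set.ncard_univ, Nat.card_eq_fintype_card, Fintype.card_prod, Fintype.card_sum,
    Fintype.card_perm]
  simp only [Fintype.card_fin]
  ring
end

section
/- Let K be a finite undirected chordal graph and let G_m denote the join of K with a complete graph on m vertices. Then for every m ≥ 0, the number of moral acyclic orientations of G_m is divisible by m!. -/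
/-!
Permutations of the `m` vertices of the complete part are automorphisms of the join, and graph
automorphisms act on moral acyclic orientations. This action of `Equiv.Perm (Fin m)` is free: an
acyclic orientation restricts on the complete part to a strict total order, and a strict total
order on a finite type has no nontrivial automorphism. So every orbit has `m!` elements.
-/

theorem Nat.card_dvd_card_of_stabilizer_eq_bot {G X : Type*} [Group G] [MulAction G X]
    (h : ∀ x : X, MulAction.stabilizer G x = ⊥) : Nat.card G ∣ Nat.card X := by
  rw [Nat.card_congr (MulAction.selfEquivOrbitsQuotientProd h), Nat.card_prod]
  exact Dvd.intro_left _ rfl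

theorem RelIso.eq_refl_of_finite {α : Type*} [Finite α] {r : α → α → Prop}
    [IsStrictTotalOrder α r] (f : r ≃r r) : f = RelIso.refl r := by
  have : IsWellOrder α r := { wf := Finite.wellFounded_of_trans_of_irrefl r }
  ext a
  exact InitialSeg.eq f.toInitialSeg (InitialSeg.refl r) a

namespace SimpleGraph

variable {V W : Type*} {G : SimpleGraph V} {H : SimpleGraph W}

def moralAcyclicOrientations (G : SimpleGraph V) : Set (V → V → Prop) :=
  {D | G.IsOrientation D ∧ IsAcyclicRel D ∧ G.IsMoralOrient D}

theorem moralAcyclicCount_eq_natCard (G : SimpleGraph V) :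
    moralAcyclicCount G = Nat.card G.moralAcyclicOrientations :=
  (Nat.card_coe_set_eq _).symm

theorem IsOrientation.comap {D : W → W → Prop} (hD : H.IsOrientation D) (f : G ↪g H) :
    G.IsOrientation fun a b => D (f a) (f b) :=
  ⟨fun _ _ => f.map_adj_iff.symm.trans (hD.1 _ _), fun _ _ => hD.2 _ _⟩

theorem _root_.IsAcyclicRel.comap {D : W → W → Prop} (hD : IsAcyclicRel D) (f : V → W) :
    IsAcyclicRel fun a b => D (f a) (f b) :=
  fun a h => hD (f a) (h.lift f fun _ _ => id)

theorem IsMoralOrient.comap {D : W → W → Prop} (hD : H.IsMoralOrient D) (f : G ↪g H) :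
    G.IsMoralOrient fun a b => D (f a) (f b) :=
  fun _ _ _ hac hbc hab => f.map_adj_iff.1 (hD _ _ _ hac hbc (f.injective.ne hab))

theorem comap_mem_moralAcyclicOrientations {D : W → W → Prop}
    (hD : D ∈ H.moralAcyclicOrientations) (f : G ↪g H) :
    (fun a b => D (f a) (f b)) ∈ G.moralAcyclicOrientations :=
  ⟨hD.1.comap f, hD.2.1.comap f, hD.2.2.comap f⟩

instance : MulAction (G ≃g G) G.moralAcyclicOrientations where
  smul φ D := ⟨fun a b => D.1 (φ.symm a) (φ.symm b),
    comap_mem_moralAcyclicOrientations D.2 φ.symm.toEmbedding⟩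
  one_smul _ := rfl
  mul_smul _ _ _ := rfl

theorem isStrictTotalOrder_of_isOrientation_top {D : V → V → Prop}
    (hD : (⊤ : SimpleGraph V).IsOrientation D) (hacyc : IsAcyclicRel D) :
    IsStrictTotalOrder V D where
  trichotomous a b hab hba := by_contra fun hne => ((hD.1 a b).1 hne).elim hab hba
  irrefl a h := hacyc a (.single h)
  trans a b c hab hbc := by
    have hac : a ≠ c := by rintro rfl; exact hacyc a (.tail (.single hab) hbc)
    exact ((hD.1 a c).1 hac).resolve_right fun hca =>
      hacyc a (.head hab (.head hbc (.single hca)))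

def Iso.completeGraphHom (α : Type*) :
    Equiv.Perm α →* (completeGraph α ≃g completeGraph α) where
  toFun := Iso.completeGraph
  map_one' := rfl
  map_mul' _ _ := rfl

end SimpleGraph

open SimpleGraph

namespace joinGraph

variable {V₁ V₂ : Type*}

def inrEmbedding (G₁ : SimpleGraph V₁) (G₂ : SimpleGraph V₂) : G₂ ↪g joinGraph G₁ G₂ where
  toEmbedding := .inr
  map_rel_iff' := Iff.rfl

def autRight (G₁ : SimpleGraph V₁) (G₂ : SimpleGraph V₂) :
    (G₂ ≃g G₂) →* (joinGraph G₁ G₂ ≃g joinGraph G₁ G₂) where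
  toFun φ :=
    { toEquiv := Equiv.sumCongr (Equiv.refl V₁) φ.toEquiv
      map_rel_iff' := by
        rintro (a | a) (b | b) <;> simp [joinGraph, φ.map_adj_iff] }
  map_one' := by ext (a | a) <;> rfl
  map_mul' _ _ := by ext (a | a) <;> rfl

theorem eq_one_of_autRight_smul_eq {α : Type*} [Finite α] {G₁ : SimpleGraph V₁}
    (D : (joinGraph G₁ (completeGraph α)).moralAcyclicOrientations) {σ : Equiv.Perm α}
    (hσ : autRight G₁ _ (Iso.completeGraphHom α σ) • D = D) : σ = 1 := by
  let r : α → α → Prop := fun i j => D.1 (.inr i) (.inr j)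
  have hr : r ∈ (completeGraph α).moralAcyclicOrientations :=
    comap_mem_moralAcyclicOrientations D.2 (inrEmbedding G₁ _)
  have := isStrictTotalOrder_of_isOrientation_top hr.1 hr.2.1
  let σr : r ≃r r :=
    ⟨σ.symm, fun {i j} => Iff.of_eq (congrArg (fun E => E.1 (.inr i) (.inr j)) hσ)⟩
  exact inv_eq_one.mp (congrArg RelIso.toEquiv (RelIso.eq_refl_of_finite σr))

end joinGraph

theorem factorial_dvd_count_general {V : Type*} (K : SimpleGraph V) :
    ∀ m : ℕ, Nat.factorial m ∣
      moralAcyclicCount (joinGraph K (⊤ : SimpleGraph (Fin m))) := by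
  intro m
  have hcard : Nat.factorial m = Nat.card (Equiv.Perm (Fin m)) := by
    rw [Nat.card_perm, Nat.card_fin]
  let _ := MulAction.compHom (joinGraph K (completeGraph (Fin m))).moralAcyclicOrientations
    ((joinGraph.autRight K _).comp (Iso.completeGraphHom (Fin m)))
  rw [moralAcyclicCount_eq_natCard, hcard]
  exact Nat.card_dvd_card_of_stabilizer_eq_bot fun D => (Subgroup.eq_bot_iff_forall _).2
    fun _ hσ => joinGraph.eq_one_of_autRight_smul_eq D (MulAction.mem_stabilizer_iff.1 hσ)

theorem factorial_dvd_count {V : Type*} [Fintype V] (K : SimpleGraph V)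
    (hchord : K.IsChordalGraph) :
    ∀ m : ℕ, Nat.factorial m ∣
      moralAcyclicCount (joinGraph K (⊤ : SimpleGraph (Fin m))) :=
  factorial_dvd_count_general K
end
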